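/- Let n ≥ 1, λ_0 ∈ ℂ, λ = (λ_1,…,λ_n) ∈ ℂⁿ and μ ∈ ℂ with Re λ_0 > 0 and Re(μ − λ_0) > 0. Then for every x ∈ ℂⁿ with |x_i| < 1 for all i, Lauricella's series F_D(λ_0, λ, μ; x) = Σ_{m∈ℕⁿ} [(λ_0)_{|m|} (λ)_m / ((μ)_{|m|} · m!)] x^m converges absolutely and admits the one-dimensional Euler-type integral representation F_D(λ_0, λ, μ; x) = [Γ(μ)/(Γ(λ_0)Γ(μ−λ_0))] · ∫_0^1 t^{λ_0−1} (1−t)^{μ−λ_0−1} ∏_{i=1}^n (1 − t x_i)^{−λ_i} dt, the integral being absolutely convergent. -/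

import Mathlib

/-!
Expand each factor `(1 - t xᵢ)^(-λᵢ)` in its binomial series and multiply the `n` series into
one series over `ℕⁿ`. Against Euler's kernel `t^(λ₀-1) (1-t)^(μ-λ₀-1)` the `m`-th term integrates
to a Beta integral `B(λ₀ + |m|, μ - λ₀)`, which by `Γ(s + k) = Γ(s) (s)ₖ` equals
`(λ₀)_{|m|} / (μ)_{|m|}` times `Γ(λ₀) Γ(μ - λ₀) / Γ(μ)`. Summation and integration commute by
dominated convergence: on `(0, 1)` the `m`-th term is bounded by the norm of the kernel times the
`m`-th term of the absolutely convergent product of the binomial series at the points `xᵢ`.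
-/

open MeasureTheory Complex

noncomputable section

/-- The Pochhammer symbol `(a)ₖ = a(a+1)⋯(a+k-1)`. -/
def poch (a : ℂ) (k : ℕ) : ℂ := ∏ i ∈ Finset.range k, (a + i)

theorem poch_eq_ascPochhammer_eval (a : ℂ) (k : ℕ) : poch a k = (ascPochhammer ℂ k).eval a := by
  induction k with
  | zero => simp [poch]
  | succ k ih => simp [poch, Finset.prod_range_succ, ascPochhammer_succ_eval, ← ih]

theorem ne_neg_natCast_of_re_pos {a : ℂ} (ha : 0 < a.re) (k : ℕ) : a ≠ -k := by
  rintro rfl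
  have hk : (0 : ℝ) ≤ k := k.cast_nonneg
  simp only [neg_re, natCast_re] at ha
  linarith

theorem poch_ne_zero {a : ℂ} (ha : ∀ k : ℕ, a ≠ -k) (k : ℕ) : poch a k ≠ 0 :=
  Finset.prod_ne_zero_iff.2 fun i _ h => ha i (eq_neg_of_add_eq_zero_left h)

theorem Gamma_add_natCast_eq_mul_poch {a : ℂ} (ha : ∀ k : ℕ, a ≠ -k) (k : ℕ) :
    Gamma (a + k) = Gamma a * poch a k := by
  rw [poch_eq_ascPochhammer_eval, ← Gamma_add_nat_div_Gamma_eq a ha,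
    mul_div_cancel₀ _ (Gamma_ne_zero ha)]

theorem choose_add_natCast_sub_one_eq_poch_div (a : ℂ) (k : ℕ) :
    Ring.choose (a + k - 1) k = poch a k / k.factorial := by
  rw [← Ring.multichoose_eq, eq_div_iff (Nat.cast_ne_zero.2 k.factorial_ne_zero), mul_comm,
    ← nsmul_eq_mul, Ring.factorial_nsmul_multichoose_eq_ascPochhammer, Polynomial.ascPochhammer_smeval_eq_eval,
    poch_eq_ascPochhammer_eval]

theorem poch_div_poch_eq_mul_betaIntegral {a b : ℂ} (ha : 0 < a.re) (hba : 0 < (b - a).re)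
    (k : ℕ) :
    poch a k / poch b k = Gamma b / (Gamma a * Gamma (b - a)) * betaIntegral (a + k) (b - a) := by
  have hb : 0 < b.re := by simpa using add_pos ha hba
  have hak : 0 < (a + k).re := by simpa using add_pos_of_pos_of_nonneg ha k.cast_nonneg
  have hEuler := Gamma_mul_Gamma_eq_betaIntegral hak hba
  rw [show a + k + (b - a) = b + k by ring, Gamma_add_natCast_eq_mul_poch
    (ne_neg_natCast_of_re_pos ha), Gamma_add_natCast_eq_mul_poch (ne_neg_natCast_of_re_pos hb)]
    at hEuler
  field_simp [poch_ne_zero (ne_neg_natCast_of_re_pos hb) k, Gamma_ne_zero_of_re_pos ha,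
    Gamma_ne_zero_of_re_pos hb, Gamma_ne_zero_of_re_pos hba]
  linear_combination hEuler

def binomialTerm (a z : ℂ) (k : ℕ) : ℂ := poch a k / k.factorial * z ^ k

theorem hasSum_binomialTerm (a : ℂ) {z : ℂ} (hz : ‖z‖ < 1) :
    HasSum (binomialTerm a z) ((1 - z) ^ (-a)) := by
  have h := (one_div_one_sub_cpow_hasFPowerSeriesOnBall_zero a).hasSum (y := z)
    (by rwa [mem_eball_zero_iff, ← ofReal_norm, ENNReal.ofReal_lt_one])
  simp only [FormalMultilinearSeries.ofScalars_apply_eq, choose_add_natCast_sub_one_eq_poch_div,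
    smul_eq_mul, zero_add, one_div, ← cpow_neg] at h
  exact h

theorem summable_norm_binomialTerm (a : ℂ) {z : ℂ} (hz : ‖z‖ < 1) :
    Summable fun k => ‖binomialTerm a z k‖ := by
  have hp := one_div_one_sub_cpow_hasFPowerSeriesOnBall_zero a
  have h := FormalMultilinearSeries.summable_norm_apply _ (Metric.eball_subset_eball hp.r_le
    (by rwa [mem_eball_zero_iff, ← ofReal_norm, ENNReal.ofReal_lt_one]))
  simp only [FormalMultilinearSeries.ofScalars_apply_eq, choose_add_natCast_sub_one_eq_poch_div,
    smul_eq_mul] at h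
  exact h

@[fun_prop]
theorem continuous_binomialTerm (a : ℂ) (k : ℕ) : Continuous fun z => binomialTerm a z k := by
  unfold binomialTerm
  fun_prop

theorem binomialTerm_mul_left (a z t : ℂ) (k : ℕ) :
    binomialTerm a (t * z) k = t ^ k * binomialTerm a z k := by
  simp only [binomialTerm, mul_pow]
  ring

theorem norm_binomialTerm_mul_left_le (a z : ℂ) {t : ℝ} (ht0 : 0 ≤ t) (ht1 : t ≤ 1) (k : ℕ) :
    ‖binomialTerm a (t * z) k‖ ≤ ‖binomialTerm a z k‖ := by
  rw [binomialTerm_mul_left, norm_mul, norm_pow, norm_real, Real.norm_of_nonneg ht0]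
  exact mul_le_of_le_one_left (norm_nonneg _) (pow_le_one₀ ht0 ht1)

section FinPiProduct

variable {κ : Type*}

theorem prod_consEquiv_apply {M : Type*} [CommMonoid M] {n : ℕ} (f : Fin (n + 1) → κ → M)
    (p : κ × (Fin n → κ)) :
    ∏ i, f i (Fin.consEquiv (fun _ => κ) p i) = f 0 p.1 * ∏ i, f i.succ (p.2 i) := by
  simp [Fin.prod_univ_succ]

theorem summable_fin_pi_prod_of_nonneg {n : ℕ} {f : Fin n → κ → ℝ} (hf : ∀ i k, 0 ≤ f i k)
    (hs : ∀ i, Summable (f i)) : Summable fun m : Fin n → κ => ∏ i, f i (m i) := by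
  induction n with
  | zero => exact (hasSum_unique fun m : Fin 0 → κ => ∏ i, f i (m i)).summable
  | succ n ih =>
    rw [← (Fin.consEquiv fun _ => κ).summable_iff]
    have htail : Summable fun m : Fin n → κ => ∏ i, f i.succ (m i) :=
      ih (fun i => hf i.succ) fun i => hs i.succ
    have h0 : 0 ≤ f 0 := hf 0
    have htail_nonneg : 0 ≤ fun m : Fin n → κ => ∏ i, f i.succ (m i) :=
      fun m => Finset.prod_nonneg fun i _ => hf i.succ (m i)
    exact ((hs 0).mul_of_nonneg htail h0 htail_nonneg).congr fun p =>
      (prod_consEquiv_apply f p).symm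

variable {R : Type*} [NormedField R] [CompleteSpace R]

theorem hasSum_fin_pi_prod_of_summable_norm {n : ℕ} {f : Fin n → κ → R} {a : Fin n → R}
    (hf : ∀ i, HasSum (f i) (a i)) (hs : ∀ i, Summable fun k => ‖f i k‖) :
    HasSum (fun m : Fin n → κ => ∏ i, f i (m i)) (∏ i, a i) := by
  induction n with
  | zero => simp
  | succ n ih =>
    rw [← (Fin.consEquiv fun _ => κ).hasSum_iff]
    simp only [Function.comp_def, prod_consEquiv_apply]
    rw [Fin.prod_univ_succ]
    have htail := ih (fun i => hf i.succ) fun i => hs i.succ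
    have htail_norm : Summable fun m : Fin n → κ => ‖∏ i, f i.succ (m i)‖ := by
      simpa only [norm_prod] using summable_fin_pi_prod_of_nonneg (fun _ _ => norm_nonneg _)
        fun i => hs i.succ
    rw [(summable_mul_of_summable_norm (hs 0) htail_norm).hasSum_iff,
      ← tsum_mul_tsum_of_summable_norm (hs 0) htail_norm, (hf 0).tsum_eq, htail.tsum_eq]

end FinPiProduct

theorem integrableOn_Ioo_cpow_mul_one_sub_cpow {u v : ℂ} (hu : 0 < u.re) (hv : 0 < v.re) :
    IntegrableOn (fun t : ℝ => (t : ℂ) ^ (u - 1) * ((1 - t : ℝ) : ℂ) ^ (v - 1)) (Set.Ioo 0 1) := by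
  have h := (intervalIntegrable_iff_integrableOn_Ioo_of_le zero_le_one).1
    (betaIntegral_convergent hu hv)
  simpa using h

theorem betaIntegral_add_natCast_eq_setIntegral_Ioo (u v : ℂ) (k : ℕ) :
    betaIntegral (u + k) v =
      ∫ t in Set.Ioo (0 : ℝ) 1, (t : ℂ) ^ (u - 1) * ((1 - t : ℝ) : ℂ) ^ (v - 1) * (t : ℂ) ^ k := by
  rw [betaIntegral, intervalIntegral.integral_of_le zero_le_one, integral_Ioc_eq_integral_Ioo]
  refine setIntegral_congr_fun measurableSet_Ioo fun t ht => ?_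
  have ht0 : (t : ℂ) ≠ 0 := ofReal_ne_zero.2 ht.1.ne'
  rw [show u + k - 1 = u - 1 + k by ring, cpow_add _ _ ht0, cpow_natCast]
  push_cast
  ring

section DominatedSeries

variable {α ι E : Type*} [MeasurableSpace α] {μ : Measure α} [NormedAddCommGroup E]
  {F : ι → α → E} {f : α → E} {w : α → ℝ} {c : ι → ℝ}

theorem integrable_of_hasSum_of_norm_le_mul [Countable ι] (hf : AEStronglyMeasurable f μ)
    (hw : Integrable w μ) (hc : Summable c) (hle : ∀ i, ∀ᵐ a ∂μ, ‖F i a‖ ≤ w a * c i)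
    (hF : ∀ᵐ a ∂μ, HasSum (fun i => F i a) (f a)) : Integrable f μ := by
  refine (hw.mul_const (∑' i, c i)).mono' hf ?_
  filter_upwards [ae_all_iff.2 hle, hF] with a ha hFa
  exact hFa.norm_le_of_bounded (hc.hasSum.mul_left (w a)) ha

variable [NormedSpace ℝ E]

theorem hasSum_integral_of_norm_le_mul [Countable ι] (hF_meas : ∀ i, AEStronglyMeasurable (F i) μ)
    (hw : Integrable w μ) (hc : Summable c) (hle : ∀ i, ∀ᵐ a ∂μ, ‖F i a‖ ≤ w a * c i)
    (hF : ∀ᵐ a ∂μ, HasSum (fun i => F i a) (f a)) :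
    HasSum (fun i => ∫ a, F i a ∂μ) (∫ a, f a ∂μ) := by
  refine hasSum_integral_of_dominated_convergence (fun i a => w a * c i) hF_meas hle
    (ae_of_all _ fun a => hc.mul_left (w a)) ?_ hF
  simpa only [tsum_mul_left] using hw.mul_const (∑' i, c i)

theorem summable_norm_integral_of_norm_le_mul (hw : Integrable w μ) (hc : Summable c)
    (hle : ∀ i, ∀ᵐ a ∂μ, ‖F i a‖ ≤ w a * c i) : Summable fun i => ‖∫ a, F i a ∂μ‖ := by
  refine (hc.mul_left (∫ a, w a ∂μ)).of_nonneg_of_le (fun _ => norm_nonneg _) fun i => ?_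
  rw [← integral_mul_const]
  exact norm_integral_le_of_norm_le (hw.mul_const (c i)) (hle i)

end DominatedSeries

section MultiBinomial

variable {n : ℕ} (lam z : Fin n → ℂ)

theorem hasSum_prod_binomialTerm (hz : ∀ i, ‖z i‖ < 1) :
    HasSum (fun m : Fin n → ℕ => ∏ i, binomialTerm (lam i) (z i) (m i))
      (∏ i, (1 - z i) ^ (-lam i)) :=
  hasSum_fin_pi_prod_of_summable_norm (fun i => hasSum_binomialTerm _ (hz i))
    fun i => summable_norm_binomialTerm _ (hz i)

theorem summable_prod_norm_binomialTerm (hz : ∀ i, ‖z i‖ < 1) :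
    Summable fun m : Fin n → ℕ => ∏ i, ‖binomialTerm (lam i) (z i) (m i)‖ :=
  summable_fin_pi_prod_of_nonneg (f := fun i k => ‖binomialTerm (lam i) (z i) k‖)
    (fun _ _ => norm_nonneg _) fun i => summable_norm_binomialTerm _ (hz i)

theorem norm_prod_binomialTerm_mul_left_le {t : ℝ} (ht0 : 0 ≤ t) (ht1 : t ≤ 1) (m : Fin n → ℕ) :
    ‖∏ i, binomialTerm (lam i) (t * z i) (m i)‖ ≤ ∏ i, ‖binomialTerm (lam i) (z i) (m i)‖ := by
  rw [norm_prod]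
  exact Finset.prod_le_prod (fun _ _ => norm_nonneg _)
    fun i _ => norm_binomialTerm_mul_left_le _ _ ht0 ht1 _

theorem setIntegral_Ioo_mul_prod_binomialTerm (u v : ℂ) (m : Fin n → ℕ) :
    ∫ t in Set.Ioo (0 : ℝ) 1, (t : ℂ) ^ (u - 1) * ((1 - t : ℝ) : ℂ) ^ (v - 1) *
        ∏ i, binomialTerm (lam i) (t * z i) (m i) =
      (∏ i, binomialTerm (lam i) (z i) (m i)) * betaIntegral (u + ↑(∑ i, m i)) v := by
  simp only [binomialTerm_mul_left, Finset.prod_mul_distrib, Finset.prod_pow_eq_pow_sum,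
    betaIntegral_add_natCast_eq_setIntegral_Ioo, ← integral_const_mul]
  congr 1 with t
  ring

theorem lauricella_term_eq_mul_setIntegral {a b : ℂ} (ha : 0 < a.re) (hba : 0 < (b - a).re)
    (m : Fin n → ℕ) :
    poch a (∑ i, m i) * (∏ i, poch (lam i) (m i)) /
        (poch b (∑ i, m i) * ∏ i, ((m i).factorial : ℂ)) * ∏ i, z i ^ m i =
      Gamma b / (Gamma a * Gamma (b - a)) *
        ∫ t in Set.Ioo (0 : ℝ) 1, (t : ℂ) ^ (a - 1) * ((1 - t : ℝ) : ℂ) ^ (b - a - 1) *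
          ∏ i, binomialTerm (lam i) (t * z i) (m i) := by
  rw [setIntegral_Ioo_mul_prod_binomialTerm, mul_left_comm,
    ← poch_div_poch_eq_mul_betaIntegral ha hba]
  simp only [binomialTerm, Finset.prod_mul_distrib, Finset.prod_div_distrib]
  ring

end MultiBinomial

theorem stmt7_general (n : ℕ) (lam0 : ℂ) (lam : Fin n → ℂ) (μ : ℂ)
    (hlam0 : 0 < lam0.re) (hμ : 0 < (μ - lam0).re)
    (x : Fin n → ℂ) (hx : ∀ i, ‖x i‖ < 1) :
    Summable (fun m : Fin n → ℕ =>
      ‖poch lam0 (∑ i, m i) * (∏ i, poch (lam i) (m i)) /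
          (poch μ (∑ i, m i) * ∏ i, (Nat.factorial (m i) : ℂ)) *
          ∏ i, x i ^ m i‖) ∧
    IntegrableOn
      (fun t : ℝ =>
        (t : ℂ) ^ (lam0 - 1) * ((1 - t : ℝ) : ℂ) ^ (μ - lam0 - 1) *
          ∏ i, (1 - (t : ℂ) * x i) ^ (-lam i))
      (Set.Ioo 0 1) ∧
    (∑' m : Fin n → ℕ,
        poch lam0 (∑ i, m i) * (∏ i, poch (lam i) (m i)) /
          (poch μ (∑ i, m i) * ∏ i, (Nat.factorial (m i) : ℂ)) *
          ∏ i, x i ^ m i)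
      = Complex.Gamma μ / (Complex.Gamma lam0 * Complex.Gamma (μ - lam0)) *
          ∫ t in Set.Ioo (0 : ℝ) 1,
            (t : ℂ) ^ (lam0 - 1) * ((1 - t : ℝ) : ℂ) ^ (μ - lam0 - 1) *
              ∏ i, (1 - (t : ℂ) * x i) ^ (-lam i) := by
  set K : ℝ → ℂ := fun t => (t : ℂ) ^ (lam0 - 1) * ((1 - t : ℝ) : ℂ) ^ (μ - lam0 - 1)
  have hK_int : Integrable (fun t => ‖K t‖) (volume.restrict (Set.Ioo 0 1)) :=
    (integrableOn_Ioo_cpow_mul_one_sub_cpow hlam0 hμ).norm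
  have hc := summable_prod_norm_binomialTerm lam x hx
  have hle : ∀ m : Fin n → ℕ, ∀ᵐ t ∂volume.restrict (Set.Ioo (0 : ℝ) 1),
      ‖K t * ∏ i, binomialTerm (lam i) (t * x i) (m i)‖ ≤
        ‖K t‖ * ∏ i, ‖binomialTerm (lam i) (x i) (m i)‖ := fun m =>
    ae_restrict_of_forall_mem measurableSet_Ioo fun t ht => by
      rw [norm_mul]
      exact mul_le_mul_of_nonneg_left
        (norm_prod_binomialTerm_mul_left_le lam x ht.1.le ht.2.le m) (norm_nonneg _)
  have hsum : ∀ᵐ t ∂volume.restrict (Set.Ioo (0 : ℝ) 1),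
      HasSum (fun m : Fin n → ℕ => K t * ∏ i, binomialTerm (lam i) (t * x i) (m i))
        (K t * ∏ i, (1 - (t : ℂ) * x i) ^ (-lam i)) :=
    ae_restrict_of_forall_mem measurableSet_Ioo fun t ht =>
      (hasSum_prod_binomialTerm lam _ fun i => by
        rw [norm_mul, norm_real, Real.norm_of_nonneg ht.1.le]
        exact mul_lt_one_of_nonneg_of_lt_one_left ht.1.le ht.2 (hx i).le).mul_left (K t)
  simp only [lauricella_term_eq_mul_setIntegral lam x hlam0 hμ, norm_mul]
  refine ⟨(summable_norm_integral_of_norm_le_mul hK_int hc hle).mul_left _,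
    integrable_of_hasSum_of_norm_le_mul (by fun_prop) hK_int hc hle hsum,
    ((hasSum_integral_of_norm_le_mul (fun m => by fun_prop) hK_int hc hle hsum).mul_left _).tsum_eq⟩

theorem stmt7 (n : ℕ) (hn : 1 ≤ n) (lam0 : ℂ) (lam : Fin n → ℂ) (μ : ℂ)
    (hlam0 : 0 < lam0.re) (hμ : 0 < (μ - lam0).re)
    (x : Fin n → ℂ) (hx : ∀ i, ‖x i‖ < 1) :
    Summable (fun m : Fin n → ℕ =>
      ‖poch lam0 (∑ i, m i) * (∏ i, poch (lam i) (m i)) /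
          (poch μ (∑ i, m i) * ∏ i, (Nat.factorial (m i) : ℂ)) *
          ∏ i, x i ^ m i‖) ∧
    IntegrableOn
      (fun t : ℝ =>
        (t : ℂ) ^ (lam0 - 1) * ((1 - t : ℝ) : ℂ) ^ (μ - lam0 - 1) *
          ∏ i, (1 - (t : ℂ) * x i) ^ (-lam i))
      (Set.Ioo 0 1) ∧
    (∑' m : Fin n → ℕ,
        poch lam0 (∑ i, m i) * (∏ i, poch (lam i) (m i)) /
          (poch μ (∑ i, m i) * ∏ i, (Nat.factorial (m i) : ℂ)) *
          ∏ i, x i ^ m i)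
      = Complex.Gamma μ / (Complex.Gamma lam0 * Complex.Gamma (μ - lam0)) *
          ∫ t in Set.Ioo (0 : ℝ) 1,
            (t : ℂ) ^ (lam0 - 1) * ((1 - t : ℝ) : ℂ) ^ (μ - lam0 - 1) *
              ∏ i, (1 - (t : ℂ) * x i) ^ (-lam i) :=
  stmt7_general n lam0 lam μ hlam0 hμ x hx
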